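/- arXiv:2303.07431 — 3 statements merged into one kernel-verified Lean document; each statement's English description precedes it below -/
import Mathlib

section
/- Let 𝔄 be a C*-algebra, ω a state on 𝔄, and A ∈ 𝔄 a nonzero element with |ω(A)| = ‖A‖. Then in the GNS representation (H_ω, π_ω, Ω_ω) of ω, the vector π_ω(A)Ω_ω is a nonzero scalar multiple of Ω_ω; consequently the state B ↦ ω(A*BA)/ω(A*A) equals ω. -/
/-!
Extend `ω` to the unitization by `ω̃ (λ + x) = λ + ω x`. Using an approximate unit one shows
`|ω x|² ≤ ω (x⋆ x)` and `ω (x⋆) = conj (ω x)`, which make `ω̃` positive. For `l = ω a` the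
hypothesis `|l| = ‖a‖` squeezes `‖a‖² = |ω a|² ≤ ω (a⋆ a) ≤ ‖a‖²`, so `ω̃ ((a - l)⋆ (a - l)) = 0`:
`a - l` is a null vector of the GNS form of `ω̃`, and by Cauchy–Schwarz it is orthogonal to
everything: `ω (b a) = l ω b`, and symmetrically `ω (a⋆ b) = conj l ω b`, whence
`ω (a⋆ b a) = |l|² ω b` and `ω (a⋆ a) = |l|²`.
-/

open scoped ComplexOrder
open Filter Topology ComplexConjugate

/-- A state on a (unital) C*-algebra: a positive linear functional of norm one. -/
def IsState {A : Type*} [NonUnitalCStarAlgebra A] [NormedSpace ℂ A] [StarModule ℂ A]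
    [SMulCommClass ℂ A A] [IsScalarTower ℂ A A] (φ : A →L[ℂ] ℂ) : Prop :=
  (∀ a : A, 0 ≤ φ (star a * a)) ∧ ‖φ‖ = 1

section PositiveFunctional

variable {R F : Type*} [NonUnitalRing R] [StarRing R] [Module ℂ R] [StarModule ℂ R]
  [SMulCommClass ℂ R R] [IsScalarTower ℂ R R] [FunLike F R ℂ] [LinearMapClass F ℂ R ℂ]

theorem conj_map_star_mul_of_nonneg {f : F} (hf : ∀ x : R, 0 ≤ f (star x * x)) (x y : R) :
    conj (f (star x * y)) = f (star y * x) := by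
  have hsum : f (star (x + y) * (x + y)) =
      f (star x * x) + f (star x * y) + f (star y * x) + f (star y * y) := by
    simp only [star_add, add_mul, mul_add, map_add]; ring
  have hrot : f (star (x + Complex.I • y) * (x + Complex.I • y)) =
      f (star x * x) + Complex.I * (f (star x * y) - f (star y * x)) + f (star y * y) := by
    simp only [star_add, star_smul, add_mul, mul_add, smul_mul_assoc, mul_smul_comm,
      map_add, map_smul, smul_eq_mul, Complex.star_def, Complex.conj_I, neg_mul]
    linear_combination (-f (star y * y)) * Complex.I_sq
  have him (z : R) : (f (star z * z)).im = 0 := (Complex.nonneg_iff.mp (hf z)).2.symm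
  have h₁ := him (x + y)
  have h₂ := him (x + Complex.I • y)
  rw [hsum] at h₁
  rw [hrot] at h₂
  simp only [Complex.add_im, Complex.mul_im, Complex.sub_re, Complex.sub_im, Complex.I_re,
    Complex.I_im, him x, him y] at h₁ h₂
  apply Complex.ext <;> simp only [Complex.conj_re, Complex.conj_im] <;> linarith

noncomputable abbrev gnsInnerCore (f : F) (hf : ∀ x : R, 0 ≤ f (star x * x)) :
    PreInnerProductSpace.Core ℂ R where
  inner x y := f (star x * y)
  conj_inner_symm x y := conj_map_star_mul_of_nonneg hf y x
  re_inner_nonneg x := (Complex.nonneg_iff.mp (hf x)).1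
  add_left x y z := by simp only [star_add, add_mul, map_add]
  smul_left x y r := by simp only [star_smul, smul_mul_assoc, map_smul, smul_eq_mul, Complex.star_def]

theorem norm_map_star_mul_sq_le {f : F} (hf : ∀ x : R, 0 ≤ f (star x * x)) (x y : R) :
    ‖f (star x * y)‖ ^ 2 ≤ (f (star x * x)).re * (f (star y * y)).re := by
  let _ := gnsInnerCore f hf
  have h : ‖f (star x * y)‖ * ‖f (star y * x)‖ ≤ (f (star x * x)).re * (f (star y * y)).re :=
    InnerProductSpace.Core.inner_mul_inner_self_le (𝕜 := ℂ) x y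
  rwa [← conj_map_star_mul_of_nonneg hf x y, RCLike.norm_conj, ← sq] at h

theorem map_star_mul_eq_zero_of_map_star_mul_self_eq_zero {f : F}
    (hf : ∀ x : R, 0 ≤ f (star x * x)) {x : R} (hx : f (star x * x) = 0) (y : R) :
    f (star y * x) = 0 := by
  have h := norm_map_star_mul_sq_le hf y x
  rw [hx, Complex.zero_re, mul_zero] at h
  exact norm_eq_zero.mp (pow_eq_zero_iff two_ne_zero |>.mp (le_antisymm h (sq_nonneg _)))

end PositiveFunctional

theorem CStarAlgebra.exists_approximateUnit_isSelfAdjoint (A : Type*) [NonUnitalCStarAlgebra A] :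
    ∃ l : Filter A, l.NeBot ∧ (∀ᶠ e in l, IsSelfAdjoint e ∧ ‖e‖ ≤ 1) ∧
      (∀ x : A, Tendsto (· * x) l (𝓝 x)) ∧ ∀ x : A, Tendsto (x * ·) l (𝓝 x) := by
  let _ := CStarAlgebra.spectralOrder A
  let _ := CStarAlgebra.spectralOrderedRing A
  have hl := CStarAlgebra.increasingApproximateUnit A
  exact ⟨_, hl.neBot, hl.eventually_isSelfAdjoint.and hl.eventually_norm, hl.tendsto_mul_right,
    hl.tendsto_mul_left⟩

section State

variable {A : Type*} [NonUnitalCStarAlgebra A] [NormedSpace ℂ A]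

theorem re_map_star_mul_self_le {ω : A →L[ℂ] ℂ} (hω : ‖ω‖ ≤ 1) (x : A) :
    (ω (star x * x)).re ≤ ‖x‖ ^ 2 :=
  calc (ω (star x * x)).re ≤ ‖ω (star x * x)‖ := Complex.re_le_norm _
    _ ≤ ‖ω‖ * ‖star x * x‖ := ω.le_opNorm _
    _ ≤ 1 * ‖x‖ ^ 2 := by rw [CStarRing.norm_star_mul_self, ← sq]; gcongr
    _ = ‖x‖ ^ 2 := one_mul _

noncomputable def extendToUnitization (ω : A →L[ℂ] ℂ) : Unitization ℂ A →ₗ[ℂ] ℂ where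
  toFun u := u.fst + ω u.snd
  map_add' u v := by simp only [Unitization.fst_add, Unitization.snd_add, map_add]; ring
  map_smul' c u := by
    simp only [Unitization.fst_smul, Unitization.snd_smul, map_smul, smul_eq_mul,
      RingHom.id_apply, mul_add]

@[simp]
theorem extendToUnitization_apply (ω : A →L[ℂ] ℂ) (u : Unitization ℂ A) :
    extendToUnitization ω u = u.fst + ω u.snd :=
  rfl

variable [StarModule ℂ A] [SMulCommClass ℂ A A] [IsScalarTower ℂ A A] {ω : A →L[ℂ] ℂ}

theorem norm_map_sq_le_re_map_star_mul_self (hpos : ∀ x : A, 0 ≤ ω (star x * x))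
    (hω : ‖ω‖ ≤ 1) (x : A) : ‖ω x‖ ^ 2 ≤ (ω (star x * x)).re := by
  obtain ⟨l, _, hl, hlx, -⟩ := CStarAlgebra.exists_approximateUnit_isSelfAdjoint A
  have hlim : Tendsto (fun e => ‖ω (e * x)‖ ^ 2) l (𝓝 (‖ω x‖ ^ 2)) :=
    ((ω.continuous.tendsto x).comp (hlx x)).norm.pow 2
  refine le_of_tendsto hlim (hl.mono fun e ⟨he, he1⟩ => ?_)
  have hre : 0 ≤ (ω (star x * x)).re := (Complex.nonneg_iff.mp (hpos x)).1
  calc ‖ω (e * x)‖ ^ 2 = ‖ω (star e * x)‖ ^ 2 := by rw [he.star_eq]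
    _ ≤ (ω (star e * e)).re * (ω (star x * x)).re := norm_map_star_mul_sq_le hpos e x
    _ ≤ 1 * (ω (star x * x)).re := by
      gcongr
      exact (re_map_star_mul_self_le hω e).trans (pow_le_one₀ (norm_nonneg e) he1)
    _ = (ω (star x * x)).re := one_mul _

theorem map_star_eq_conj (hpos : ∀ x : A, 0 ≤ ω (star x * x)) (x : A) :
    ω (star x) = conj (ω x) := by
  obtain ⟨l, _, hl, hlx, hxl⟩ := CStarAlgebra.exists_approximateUnit_isSelfAdjoint A
  have h₁ : Tendsto (fun e => ω (star x * e)) l (𝓝 (ω (star x))) :=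
    (ω.continuous.tendsto _).comp (hxl (star x))
  have h₂ : Tendsto (fun e => conj (ω (e * x))) l (𝓝 (conj (ω x))) :=
    (Complex.continuous_conj.tendsto _).comp ((ω.continuous.tendsto x).comp (hlx x))
  refine tendsto_nhds_unique_of_eventuallyEq h₁ h₂ (hl.mono fun e ⟨he, _⟩ => ?_)
  show ω (star x * e) = conj (ω (e * x))
  rw [← conj_map_star_mul_of_nonneg hpos e x, he.star_eq]

theorem extendToUnitization_star_mul_self (hpos : ∀ x : A, 0 ≤ ω (star x * x))
    (u : Unitization ℂ A) :
    extendToUnitization ω (star u * u) =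
      ‖u.fst + ω u.snd‖ ^ 2 + (ω (star u.snd * u.snd) - ‖ω u.snd‖ ^ 2) := by
  simp only [extendToUnitization_apply, Unitization.fst_mul, Unitization.snd_mul,
    Unitization.fst_star, Unitization.snd_star, map_add, map_smul, smul_eq_mul, Complex.star_def,
    map_star_eq_conj hpos, ← Complex.conj_mul']
  ring

theorem extendToUnitization_nonneg (hpos : ∀ x : A, 0 ≤ ω (star x * x)) (hω : ‖ω‖ ≤ 1)
    (u : Unitization ℂ A) : 0 ≤ extendToUnitization ω (star u * u) := by
  rw [extendToUnitization_star_mul_self hpos]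
  have hsnd : ((‖ω u.snd‖ ^ 2 : ℝ) : ℂ) ≤ ω (star u.snd * u.snd) :=
    Complex.le_def.mpr ⟨norm_map_sq_le_re_map_star_mul_self hpos hω u.snd,
      (Complex.nonneg_iff.mp (hpos u.snd)).2⟩
  push_cast at hsnd
  exact add_nonneg (by norm_cast; positivity) (sub_nonneg.mpr hsnd)

theorem map_star_mul_self_eq_of_norm_map_eq (hpos : ∀ x : A, 0 ≤ ω (star x * x))
    (hω : ‖ω‖ ≤ 1) {a : A} (ha : ‖ω a‖ = ‖a‖) : ω (star a * a) = ‖ω a‖ ^ 2 := by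
  apply Complex.ext
  · refine le_antisymm ?_ ?_ <;> norm_cast
    · exact ha ▸ re_map_star_mul_self_le hω a
    · exact norm_map_sq_le_re_map_star_mul_self hpos hω a
  · simpa [← Complex.ofReal_pow] using (Complex.nonneg_iff.mp (hpos a)).2.symm

theorem extendToUnitization_star_mul_self_eq_zero (hpos : ∀ x : A, 0 ≤ ω (star x * x))
    (hω : ‖ω‖ ≤ 1) {a : A} (ha : ‖ω a‖ = ‖a‖) :
    extendToUnitization ω (star (Unitization.inl (-ω a) + (a : Unitization ℂ A)) *
      (Unitization.inl (-ω a) + (a : Unitization ℂ A))) = 0 := by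
  rw [extendToUnitization_star_mul_self hpos]
  simp [map_star_mul_self_eq_of_norm_map_eq hpos hω ha]

theorem map_mul_eq_mul_of_norm_map_eq (hpos : ∀ x : A, 0 ≤ ω (star x * x))
    (hω : ‖ω‖ ≤ 1) {a : A} (ha : ‖ω a‖ = ‖a‖) (b : A) : ω (b * a) = ω a * ω b := by
  -- instance search misses these, although `Unitization ℂ A` is a `ℂ`-algebra
  have : IsScalarTower ℂ (Unitization ℂ A) (Unitization ℂ A) :=
    IsScalarTower.right (R := ℂ) (A := Unitization ℂ A)
  have : SMulCommClass ℂ (Unitization ℂ A) (Unitization ℂ A) :=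
    Algebra.to_smulCommClass (R := ℂ) (A := Unitization ℂ A)
  have h : -(ω a * ω b) + ω (b * a) = 0 := by
    simpa using map_star_mul_eq_zero_of_map_star_mul_self_eq_zero
      (extendToUnitization_nonneg hpos hω) (extendToUnitization_star_mul_self_eq_zero hpos hω ha)
      (star b : Unitization ℂ A)
  linear_combination h

theorem map_star_mul_eq_conj_mul_of_norm_map_eq (hpos : ∀ x : A, 0 ≤ ω (star x * x))
    (hω : ‖ω‖ ≤ 1) {a : A} (ha : ‖ω a‖ = ‖a‖) (b : A) : ω (star a * b) = conj (ω a) * ω b := by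
  rw [← conj_map_star_mul_of_nonneg hpos b a, map_mul_eq_mul_of_norm_map_eq hpos hω ha,
    map_star_eq_conj hpos, map_mul, Complex.conj_conj]

end State

-- `π_ω(a) Ω_ω = l • Ω_ω` iff `⟪π_ω(b⋆) Ω_ω, π_ω(a) Ω_ω - l • Ω_ω⟫ = ω (b * a) - l * ω b` vanishes
-- for every `b`, as `Ω_ω` is cyclic: this is the first conjunct.
/-- If `ω` is a state on a C*-algebra `A` and `a ≠ 0` satisfies `|ω a| = ‖a‖`, then in the
GNS representation the vector `π_ω(a) Ω_ω` is a nonzero scalar multiple of the cyclic vector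
`Ω_ω` (equivalently, there is a nonzero scalar `l` with `ω (b * a) = l * ω b` for all `b`),
and consequently the state `b ↦ ω (a* b a) / ω (a* a)` equals `ω`. -/
theorem stmt_0 {A : Type*} [NonUnitalCStarAlgebra A] [NormedSpace ℂ A] [StarModule ℂ A]
    [SMulCommClass ℂ A A] [IsScalarTower ℂ A A]
    (ω : A →L[ℂ] ℂ) (hω : IsState ω)
    (a : A) (ha : a ≠ 0) (hmax : ‖ω a‖ = ‖a‖) :
    (∃ l : ℂ, l ≠ 0 ∧ ∀ b : A, ω (b * a) = l * ω b) ∧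
      ∀ b : A, ω (star a * b * a) / ω (star a * a) = ω b := by
  obtain ⟨hpos, hnorm⟩ := hω
  have hωa : ω a ≠ 0 := by rwa [← norm_ne_zero_iff, hmax, norm_ne_zero_iff]
  have hmul := map_mul_eq_mul_of_norm_map_eq hpos hnorm.le hmax
  have hconj := map_star_mul_eq_conj_mul_of_norm_map_eq hpos hnorm.le hmax
  refine ⟨⟨ω a, hωa, hmul⟩, fun b => ?_⟩
  have hconj_ne : conj (ω a) ≠ 0 := (map_ne_zero _).mpr hωa
  rw [mul_assoc, hconj, hmul, hconj]
  field_simp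
end

section
/- Let γ : [0,1] → D² be a continuous path in the closed unit disk D² ⊂ ℂ. Then there exists a continuous map λ : [0,1] → S¹ ⊂ ℂ such that for all t ∈ [0,1], either λ(t)·γ(t) = 1 or |γ(t)| < 1. -/
/-!
Cut `[0,1]` into intervals on which `γ` oscillates by less than `1` and build `u = λ⁻¹`
interval by interval as a continuous unit-valued function that is a direction of `γ`
(`‖γ‖ * u = γ`) at the partition points and equals `γ` wherever `‖γ‖ = 1`. On an interval where
`γ` does not vanish, `u` continues as `γ / ‖γ‖`. Otherwise `γ` stays in the open disk there, so `u`
only has to reach a direction of `γ` at the right endpoint, which an arc of the circle does.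
-/

open Set Complex

theorem exists_norm_eq_one_mul_eq (z : ℂ) : ∃ q : ℂ, ‖q‖ = 1 ∧ ‖z‖ * q = z :=
  ⟨exp (arg z * I), norm_exp_ofReal_mul_I _, norm_mul_exp_arg_mul_I z⟩

theorem exists_continuous_unit_extend_mul {u w : ℝ → ℂ} {a b : ℝ} (hab : a ≤ b)
    (hu : Continuous u) (hu1 : ∀ t, ‖u t‖ = 1) (hw : ContinuousOn w (Icc a b))
    (hw1 : ∀ t ∈ Icc a b, ‖w t‖ = 1) (hwa : w a = 1) :
    ∃ v : ℝ → ℂ, Continuous v ∧ (∀ t, ‖v t‖ = 1) ∧ EqOn v u (Iic a) ∧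
      ∀ t ∈ Icc a b, v t = u a * w t := by
  refine ⟨fun t => u (min t a) * IccExtend hab ((Icc a b).domRestrict w) t, ?_, fun t => ?_,
    fun t (ht : t ≤ a) => ?_, fun t ht => ?_⟩
  · exact (hu.comp (continuous_id.min continuous_const)).mul hw.domRestrict.Icc_extend'
  · rw [norm_mul, hu1, one_mul]
    exact hw1 _ (projIcc a b hab t).2
  · simp only [IccExtend_of_le_left _ _ ht, min_eq_left ht, domRestrict_apply, hwa, mul_one]
  · simp only [IccExtend_of_mem _ _ ht, min_eq_right ht.1, domRestrict_apply]

theorem exists_continuous_unit_extend_to {u : ℝ → ℂ} {a b : ℝ} (hab : a < b)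
    (hu : Continuous u) (hu1 : ∀ t, ‖u t‖ = 1) {q : ℂ} (hq : ‖q‖ = 1) :
    ∃ v : ℝ → ℂ, Continuous v ∧ (∀ t, ‖v t‖ = 1) ∧ EqOn v u (Iic a) ∧ v b = q := by
  set α := arg (q / u a)
  obtain ⟨v, hv, hv1, hvu, hvw⟩ := exists_continuous_unit_extend_mul hab.le hu hu1
    (w := fun t => exp (((t - a) / (b - a) * α : ℝ) * I)) (by fun_prop)
    (fun t _ => norm_exp_ofReal_mul_I _) (by simp)
  refine ⟨v, hv, hv1, hvu, ?_⟩
  have hα : exp (α * I) = q / u a := by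
    simpa [norm_div, hq, hu1] using norm_mul_exp_arg_mul_I (q / u a)
  have hua : u a ≠ 0 := norm_ne_zero_iff.mp (by simp [hu1])
  rw [hvw b ⟨hab.le, le_rfl⟩, div_self (sub_ne_zero.mpr hab.ne'), one_mul, hα,
    mul_div_cancel₀ _ hua]

theorem exists_continuous_unit_extend_of_ne_zero {f u : ℝ → ℂ} {a b : ℝ} (hab : a ≤ b)
    (hf : ContinuousOn f (Icc a b)) (hf0 : ∀ t ∈ Icc a b, f t ≠ 0) (hu : Continuous u)
    (hu1 : ∀ t, ‖u t‖ = 1) (hua : ‖f a‖ * u a = f a) :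
    ∃ v : ℝ → ℂ, Continuous v ∧ (∀ t, ‖v t‖ = 1) ∧ EqOn v u (Iic a) ∧
      ∀ t ∈ Icc a b, ‖f t‖ * v t = f t := by
  have hnorm : ∀ t ∈ Icc a b, (‖f t‖ : ℂ) ≠ 0 := fun t ht => by simpa using hf0 t ht
  have hua' : f a / ‖f a‖ = u a := by
    rw [div_eq_iff (hnorm a ⟨le_rfl, hab⟩), mul_comm, hua]
  have hu0 : u a ≠ 0 := norm_ne_zero_iff.mp (by simp [hu1])
  obtain ⟨v, hv, hv1, hvu, hvw⟩ := exists_continuous_unit_extend_mul hab hu hu1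
    (w := fun t => f t / ‖f t‖ / u a)
    ((hf.div (continuous_ofReal.comp_continuousOn hf.norm) hnorm).div_const _)
    (fun t ht => by simp [hu1, hf0 t ht]) (by simp [hua', hu0])
  refine ⟨v, hv, hv1, hvu, fun t ht => ?_⟩
  rw [hvw t ht, mul_div_cancel₀ _ hu0, mul_div_cancel₀ _ (hnorm t ht)]

theorem exists_continuous_unit_step {f u : ℝ → ℂ} {a b : ℝ} (hab : a < b)
    (hf : ContinuousOn f (Icc a b)) (hosc : ∀ s ∈ Icc a b, ∀ t ∈ Icc a b, dist (f s) (f t) < 1)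
    (hu : Continuous u) (hu1 : ∀ t, ‖u t‖ = 1) (hua : ‖f a‖ * u a = f a) :
    ∃ v : ℝ → ℂ, Continuous v ∧ (∀ t, ‖v t‖ = 1) ∧ EqOn v u (Iic a) ∧
      ‖f b‖ * v b = f b ∧ ∀ t ∈ Icc a b, ‖f t‖ = 1 → v t = f t := by
  by_cases hf0 : ∀ t ∈ Icc a b, f t ≠ 0
  · obtain ⟨v, hv, hv1, hvu, hvf⟩ :=
      exists_continuous_unit_extend_of_ne_zero hab.le hf hf0 hu hu1 hua
    refine ⟨v, hv, hv1, hvu, hvf b ⟨hab.le, le_rfl⟩, fun t ht h1 => ?_⟩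
    simpa [h1] using hvf t ht
  · push Not at hf0
    obtain ⟨s, hs, hfs⟩ := hf0
    obtain ⟨q, hq, hqf⟩ := exists_norm_eq_one_mul_eq (f b)
    obtain ⟨v, hv, hv1, hvu, hvb⟩ := exists_continuous_unit_extend_to hab hu hu1 hq
    refine ⟨v, hv, hv1, hvu, hvb ▸ hqf, fun t ht h1 => absurd h1 (ne_of_lt ?_)⟩
    simpa [hfs] using hosc t ht s hs

theorem exists_continuous_unit_of_partition {f : ℝ → ℂ} (hf : Continuous f) {x : ℕ → ℝ}
    (hx : StrictMono x)
    (hosc : ∀ k, ∀ s ∈ Icc (x k) (x (k + 1)), ∀ t ∈ Icc (x k) (x (k + 1)), dist (f s) (f t) < 1)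
    (n : ℕ) :
    ∃ u : ℝ → ℂ, Continuous u ∧ (∀ t, ‖u t‖ = 1) ∧ ‖f (x n)‖ * u (x n) = f (x n) ∧
      ∀ t ∈ Icc (x 0) (x n), ‖f t‖ = 1 → u t = f t := by
  induction n with
  | zero =>
    obtain ⟨q, hq, hqf⟩ := exists_norm_eq_one_mul_eq (f (x 0))
    refine ⟨fun _ => q, continuous_const, fun _ => hq, hqf, fun t ht h1 => ?_⟩
    rw [Icc_self, mem_singleton_iff] at ht
    subst ht
    simpa [h1] using hqf
  | succ n ih =>
    obtain ⟨u, hu, hu1, hun, huf⟩ := ih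
    obtain ⟨v, hv, hv1, hvu, hvn, hvf⟩ := exists_continuous_unit_step (hx (Nat.lt_succ_self n))
      hf.continuousOn (hosc n) hu hu1 hun
    refine ⟨v, hv, hv1, hvn, fun t ht h1 => ?_⟩
    rcases le_total t (x n) with htn | htn
    · rw [hvu htn]
      exact huf t ⟨ht.1, htn⟩ h1
    · exact hvf t ⟨htn, ht.2⟩ h1

theorem exists_continuous_unit_eq_of_norm_eq_one {f : ℝ → ℂ} (hf : UniformContinuous f) :
    ∃ u : ℝ → ℂ, Continuous u ∧ (∀ t, ‖u t‖ = 1) ∧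
      ∀ t ∈ Icc (0 : ℝ) 1, ‖f t‖ = 1 → u t = f t := by
  obtain ⟨δ, hδ, hfδ⟩ := Metric.uniformContinuous_iff.mp hf 1 one_pos
  obtain ⟨N, hN⟩ := exists_nat_one_div_lt hδ
  set x : ℕ → ℝ := fun k => k / (N + 1)
  have hN0 : (0 : ℝ) < N + 1 := N.cast_add_one_pos
  have hx : StrictMono x := fun i j hij => div_lt_div_of_pos_right (by exact_mod_cast hij) hN0
  have hosc (k : ℕ) : ∀ s ∈ Icc (x k) (x (k + 1)), ∀ t ∈ Icc (x k) (x (k + 1)),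
      dist (f s) (f t) < 1 := by
    intro s hs t ht
    refine hfδ ((Real.dist_le_of_mem_Icc hs ht).trans_lt ?_)
    convert hN using 1
    simp only [x]
    push_cast
    ring
  obtain ⟨u, hu, hu1, -, huf⟩ := exists_continuous_unit_of_partition hf.continuous hx hosc (N + 1)
  refine ⟨u, hu, hu1, fun t ht => huf t ?_⟩
  simpa [x, hN0.ne'] using ht

/-- Given a continuous path `γ` in the closed unit disk `D² ⊂ ℂ`, there is a continuous map
`λ : [0,1] → S¹` such that for every `t`, either `λ t * γ t = 1` or `|γ t| < 1`. -/
theorem stmt_4 (γ : Set.Icc (0 : ℝ) 1 → ℂ) (hγ_cont : Continuous γ)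
    (hγ_disk : ∀ t, ‖γ t‖ ≤ 1) :
    ∃ lam : Set.Icc (0 : ℝ) 1 → ℂ, Continuous lam ∧ (∀ t, ‖lam t‖ = 1) ∧
      ∀ t, lam t * γ t = 1 ∨ ‖γ t‖ < 1 := by
  have hf : UniformContinuous (IccExtend zero_le_one γ) :=
    (CompactSpace.uniformContinuous_of_continuous hγ_cont).comp
      (LipschitzWith.projIcc zero_le_one).uniformContinuous
  obtain ⟨u, hu, hu1, huγ⟩ := exists_continuous_unit_eq_of_norm_eq_one hf
  have hu0 (t : ℝ) : u t ≠ 0 := norm_ne_zero_iff.mp (by simp [hu1])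
  refine ⟨fun t => (u t)⁻¹, (hu.comp continuous_subtype_val).inv₀ fun t => hu0 t,
    fun t => by simp [hu1], fun t => ?_⟩
  refine (hγ_disk t).eq_or_lt.imp (fun h1 => ?_) id
  have hut : u t = γ t := by simpa [h1] using huγ t t.2
  simp only [← hut, inv_mul_cancel₀ (hu0 t)]
end

section
/- Let M be a commutative monoid, m ∈ M, and suppose the localization m⁻¹M is a group. Then the canonical map ι₀ : M → m⁻¹M is the Grothendieck group completion of M: for every abelian group A and monoid homomorphism f : M → A there exists a unique group homomorphism g : m⁻¹M → A with g ∘ ι₀ = f. -/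
universe u v

theorem Submonoid.LocalizationMap.existsUnique_comp_eq {M N P : Type*} [CommMonoid M]
    [CommMonoid N] [CommMonoid P] {S : Submonoid M} (k : S.LocalizationMap N) (f : M →* P)
    (hf : ∀ y : S, IsUnit (f y)) :
    ∃! g : N →* P, g.comp k.toMonoidHom = f :=
  ⟨k.lift hf, k.lift_comp hf, fun _ hg =>
    (k.lift_unique hf fun x => DFunLike.congr_fun hg x).symm⟩

theorem stmt_17_general {M : Type u} [CommMonoid M] (m : M) :
    ∀ (A : Type v) [CommGroup A] (f : M →* A),
      ∃! g : Localization (Submonoid.powers m) →* A,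
        g.comp (Localization.monoidOf (Submonoid.powers m)).toMonoidHom = f :=
  fun _ _ f => (Localization.monoidOf _).existsUnique_comp_eq f fun _ => Group.isUnit _

/-- If the localization `m⁻¹M` of a commutative monoid `M` at an element `m` is a group, then
the canonical map `ι₀ : M → m⁻¹M` is the Grothendieck group completion of `M`: every monoid
homomorphism from `M` to an abelian group factors uniquely through it. -/
theorem stmt_17 {M : Type u} [CommMonoid M] (m : M)
    (hgrp : ∀ x : Localization (Submonoid.powers m), IsUnit x) :
    ∀ (A : Type v) [CommGroup A] (f : M →* A),
      ∃! g : Localization (Submonoid.powers m) →* A,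
        g.comp (Localization.monoidOf (Submonoid.powers m)).toMonoidHom = f :=
  stmt_17_general m
end
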